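/- arXiv:0804.2593 — 7 statements merged into one kernel-verified Lean document; each statement's English description precedes it below -/
import Mathlib

section
/- For any x ∈ G, min(t, r_{A,B}(x)) is at least min(v, r_{A∩B, A∪B}(x)) + min(t−v, r_{A\B, B\A}(x)) whenever 0 ≤ v ≤ t; consequently, the sum over i from 1 to t of |N_i(A,B)| is at least the sum over i from 1 to v of |N_i(A∩B, A∪B)| plus the sum over i from 1 to t−v of |N_i(A\B, B\A)|. -/
open Finset Pointwise

variable {G : Type*} [CommGroup G] [DecidableEq G]

/-- Number of representations of `x` as a product `a * b` with `a ∈ A`, `b ∈ B`. -/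
def rep (A B : Finset G) (x : G) : ℕ :=
  ((A ×ˢ B).filter (fun p => p.1 * p.2 = x)).card

/-- Elements of `A * B` having at least `t` representations. -/
def N (t : ℕ) (A B : Finset G) : Finset G :=
  (A * B).filter (fun x => t ≤ rep A B x)

/-- `α(A,B)`: cardinality of the largest coset of a subgroup contained in `A * B`. -/
noncomputable def alphaC (A B : Finset G) : ℕ :=
  sSup {n | ∃ (H : Subgroup G) (g : G) (C : Finset G),
    (C : Set G) = g • (H : Set G) ∧ C ⊆ A * B ∧ C.card = n}

lemma rep_eq_zero (A B : Finset G) (x : G) (hx : x ∉ A * B) : rep A B x = 0 := by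
  rw [rep, Finset.card_eq_zero, Finset.filter_eq_empty_iff]
  rintro ⟨a, b⟩ hab h
  simp only [Finset.mem_product] at hab
  exact hx (h ▸ Finset.mul_mem_mul hab.1 hab.2)

lemma rep_key (A B : Finset G) (x : G) :
    rep (A ∩ B) (A ∪ B) x + rep (A \ B) (B \ A) x ≤ rep A B x := by
  classical
  set T := (A ×ˢ B).filter (fun p : G × G => p.1 * p.2 = x) with hT
  set S1 := ((A ∩ B) ×ˢ (A ∪ B)).filter (fun p : G × G => p.1 * p.2 = x) with hS1
  set S2 := ((A \ B) ×ˢ (B \ A)).filter (fun p : G × G => p.1 * p.2 = x) with hS2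
  set S1a := S1.filter (fun p : G × G => p.2 ∈ B) with hS1a
  set S1b := (S1.filter (fun p : G × G => p.2 ∉ B)).image Prod.swap with hS1b
  have hsplit : S1.card = S1a.card + S1b.card := by
    rw [hS1b, Finset.card_image_of_injective _ Prod.swap_injective]
    exact (Finset.card_filter_add_card_filter_not _).symm
  have h1 : S1a ⊆ T := by
    intro p hp
    simp only [hS1a, hS1, hT, Finset.mem_filter, Finset.mem_product, Finset.mem_inter,
      Finset.mem_union] at hp ⊢
    tauto
  have h2 : S1b ⊆ T := by
    intro p hp
    simp only [hS1b, hS1, hT, Finset.mem_image, Finset.mem_filter, Finset.mem_product,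
      Finset.mem_inter, Finset.mem_union] at hp ⊢
    obtain ⟨q, ⟨⟨⟨⟨hqA, hqB⟩, hq2⟩, hmul⟩, hqnB⟩, rfl⟩ := hp
    refine ⟨⟨?_, hqB⟩, ?_⟩
    · rcases hq2 with h | h
      · exact h
      · exact absurd h hqnB
    · simpa [mul_comm] using hmul
  have h3 : S2 ⊆ T := by
    intro p hp
    simp only [hS2, hT, Finset.mem_filter, Finset.mem_product, Finset.mem_sdiff] at hp ⊢
    tauto
  have d1 : Disjoint S1a S1b := by
    rw [Finset.disjoint_left]
    intro p hp hp'
    simp only [hS1a, hS1, Finset.mem_filter, Finset.mem_product, Finset.mem_inter] at hp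
    simp only [hS1b, hS1, Finset.mem_image, Finset.mem_filter] at hp'
    obtain ⟨q, ⟨_, hqnB⟩, rfl⟩ := hp'
    exact hqnB hp.1.1.1.2
  have d2 : Disjoint (S1a ∪ S1b) S2 := by
    rw [Finset.disjoint_left]
    intro p hp hp'
    simp only [hS2, Finset.mem_filter, Finset.mem_product, Finset.mem_sdiff] at hp'
    rcases Finset.mem_union.mp hp with h | h
    · simp only [hS1a, hS1, Finset.mem_filter, Finset.mem_product, Finset.mem_inter] at h
      exact hp'.1.1.2 h.1.1.1.2
    · simp only [hS1b, hS1, Finset.mem_image, Finset.mem_filter, Finset.mem_product,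
        Finset.mem_inter] at h
      obtain ⟨q, ⟨⟨⟨⟨hqA, hqB⟩, _⟩, _⟩, _⟩, rfl⟩ := h
      exact hp'.1.2.2 hqA
  have hsub : S1a ∪ S1b ∪ S2 ⊆ T := by
    intro p hp
    rcases Finset.mem_union.mp hp with h | h
    · rcases Finset.mem_union.mp h with h' | h'
      · exact h1 h'
      · exact h2 h'
    · exact h3 h
  have hcard : S1a.card + S1b.card + S2.card ≤ T.card := by
    calc S1a.card + S1b.card + S2.card
        = (S1a ∪ S1b).card + S2.card := by rw [Finset.card_union_of_disjoint d1]
      _ = (S1a ∪ S1b ∪ S2).card := (Finset.card_union_of_disjoint d2).symm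
      _ ≤ T.card := Finset.card_le_card hsub
  calc rep (A ∩ B) (A ∪ B) x + rep (A \ B) (B \ A) x
      = S1.card + S2.card := rfl
    _ = S1a.card + S1b.card + S2.card := by rw [hsplit]
    _ ≤ T.card := hcard
    _ = rep A B x := rfl

lemma sumN (A B : Finset G) (t : ℕ) :
    ∑ i ∈ Finset.Icc 1 t, (N i A B).card = ∑ x ∈ A * B, min t (rep A B x) := by
  have h1 : ∀ i, (N i A B).card = ∑ x ∈ A * B, if i ≤ rep A B x then 1 else 0 := fun i => by
    rw [N, Finset.card_filter]
  calc ∑ i ∈ Finset.Icc 1 t, (N i A B).card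
      = ∑ i ∈ Finset.Icc 1 t, ∑ x ∈ A * B, if i ≤ rep A B x then 1 else 0 := by
        exact Finset.sum_congr rfl fun i _ => h1 i
    _ = ∑ x ∈ A * B, ∑ i ∈ Finset.Icc 1 t, if i ≤ rep A B x then 1 else 0 :=
        Finset.sum_comm
    _ = ∑ x ∈ A * B, min t (rep A B x) := by
        refine Finset.sum_congr rfl fun x _ => ?_
        rw [← Finset.card_filter]
        have : (Finset.Icc 1 t).filter (fun i => i ≤ rep A B x)
            = Finset.Icc 1 (min t (rep A B x)) := by
          ext i
          simp only [Finset.mem_filter, Finset.mem_Icc, le_min_iff]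
          omega
        rw [this, Nat.card_Icc]
        omega

theorem stmt3 (A B : Finset G) (hA : A.Nonempty) (hB : B.Nonempty) (t v : ℕ) (hv : v ≤ t) :
    (∀ x : G, min v (rep (A ∩ B) (A ∪ B) x) + min (t - v) (rep (A \ B) (B \ A) x) ≤
      min t (rep A B x)) ∧
    ∑ i ∈ Finset.Icc 1 v, (N i (A ∩ B) (A ∪ B)).card +
      ∑ i ∈ Finset.Icc 1 (t - v), (N i (A \ B) (B \ A)).card ≤
      ∑ i ∈ Finset.Icc 1 t, (N i A B).card := by
  have key : ∀ x : G, min v (rep (A ∩ B) (A ∪ B) x) + min (t - v) (rep (A \ B) (B \ A) x) ≤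
      min t (rep A B x) := by
    intro x
    have h := rep_key A B x
    refine le_min ?_ ?_
    · calc min v (rep (A ∩ B) (A ∪ B) x) + min (t - v) (rep (A \ B) (B \ A) x)
          ≤ v + (t - v) := add_le_add (min_le_left _ _) (min_le_left _ _)
        _ = t := Nat.add_sub_cancel' hv
    · calc min v (rep (A ∩ B) (A ∪ B) x) + min (t - v) (rep (A \ B) (B \ A) x)
          ≤ rep (A ∩ B) (A ∪ B) x + rep (A \ B) (B \ A) x :=
            add_le_add (min_le_right _ _) (min_le_right _ _)
        _ ≤ rep A B x := h
  refine ⟨key, ?_⟩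
  set U := (A * B) ∪ ((A ∩ B) * (A ∪ B)) ∪ ((A \ B) * (B \ A)) with hU
  have e1 : ∑ i ∈ Finset.Icc 1 t, (N i A B).card = ∑ x ∈ U, min t (rep A B x) := by
    rw [sumN]
    refine Finset.sum_subset ?_ fun x _ hx => ?_
    · exact (Finset.subset_union_left).trans Finset.subset_union_left
    · rw [rep_eq_zero _ _ _ hx, Nat.min_zero]
  have e2 : ∑ i ∈ Finset.Icc 1 v, (N i (A ∩ B) (A ∪ B)).card
      = ∑ x ∈ U, min v (rep (A ∩ B) (A ∪ B) x) := by
    rw [sumN]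
    refine Finset.sum_subset ?_ fun x _ hx => ?_
    · exact (Finset.subset_union_right).trans Finset.subset_union_left
    · rw [rep_eq_zero _ _ _ hx, Nat.min_zero]
  have e3 : ∑ i ∈ Finset.Icc 1 (t - v), (N i (A \ B) (B \ A)).card
      = ∑ x ∈ U, min (t - v) (rep (A \ B) (B \ A) x) := by
    rw [sumN]
    refine Finset.sum_subset ?_ fun x _ hx => ?_
    · exact Finset.subset_union_right
    · rw [rep_eq_zero _ _ _ hx, Nat.min_zero]
  rw [e1, e2, e3, ← Finset.sum_add_distrib]
  exact Finset.sum_le_sum fun x _ => key x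
end

section
/- For finite nonempty subsets A, B of an abelian group and any integer t ≥ 1, one has N_t(A∩B, A∪B) ⊆ N_t(A,B). -/
open Finset Pointwise

variable {G : Type*} [CommGroup G] [DecidableEq G]

theorem stmt4 (A B : Finset G) (hA : A.Nonempty) (hB : B.Nonempty) (t : ℕ) (ht : 1 ≤ t) :
    N t (A ∩ B) (A ∪ B) ⊆ N t A B := by
  intro x hx
  simp only [N, mem_filter] at hx ⊢
  obtain ⟨hx1, hx2⟩ := hx
  have key : rep (A ∩ B) (A ∪ B) x ≤ rep A B x := by
    unfold rep
    apply Finset.card_le_card_of_injOn (fun p => if p.2 ∈ B then p else (p.2, p.1))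
    · intro p hp
      simp only [mem_coe, mem_filter, mem_product, mem_inter, mem_union] at hp
      obtain ⟨⟨⟨ha1, ha2⟩, hb⟩, hprod⟩ := hp
      by_cases h : p.2 ∈ B
      · simp only [if_pos h, mem_coe, mem_filter, mem_product]
        exact ⟨⟨ha1, h⟩, hprod⟩
      · have hb' : p.2 ∈ A := hb.resolve_right h
        simp only [if_neg h, mem_coe, mem_filter, mem_product]
        exact ⟨⟨hb', ha2⟩, by rw [mul_comm]; exact hprod⟩
    · intro p hp q hq hpq
      simp only [mem_coe, mem_filter, mem_product, mem_inter, mem_union] at hp hq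
      by_cases h1 : p.2 ∈ B <;> by_cases h2 : q.2 ∈ B <;>
        simp only [if_pos, if_neg, h1, h2, if_true, if_false] at hpq
      · exact hpq
      · exfalso
        have h' : p.1 = q.2 := congrArg Prod.fst hpq
        exact h2 (h' ▸ hp.1.1.2)
      · exfalso
        have h' : p.2 = q.1 := congrArg Prod.fst hpq
        exact h1 (h'.symm ▸ hq.1.1.2)
      · exact Prod.ext (congrArg Prod.snd hpq) (congrArg Prod.fst hpq)
  have htrep : t ≤ rep A B x := le_trans hx2 key
  have hpos : 0 < rep A B x := lt_of_lt_of_le ht htrep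
  rw [rep, Finset.card_pos] at hpos
  obtain ⟨p, hp⟩ := hpos
  simp only [mem_filter, mem_product] at hp
  exact ⟨hp.2 ▸ Finset.mul_mem_mul hp.1.1 hp.1.2, htrep⟩
end

section
/- For finite nonempty subsets A, B of an abelian group G and any a ∈ G, α(aA ∪ B, aA ∩ B) ≤ α(A, B), where α(X,Y) denotes the size of the largest coset of a subgroup of G contained in the product set XY (α is taken to be 0 if one of the sets is empty). -/
open Finset Pointwise

variable {G : Type*} [CommGroup G] [DecidableEq G]

theorem stmt5 (A B : Finset G) (hA : A.Nonempty) (hB : B.Nonempty) (a : G) :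
    alphaC (a • A ∪ B) (a • A ∩ B) ≤ alphaC A B := by
  have hsub : (a • A ∪ B) * (a • A ∩ B) ⊆ a • (A * B) := by
    intro x hx
    rw [Finset.mem_mul] at hx
    obtain ⟨u, hu, v, hv, rfl⟩ := hx
    rw [Finset.mem_union] at hu
    rw [Finset.mem_inter] at hv
    rw [Finset.mem_smul_finset]
    rcases hu with hu | hu
    · obtain ⟨u', hu', rfl⟩ := Finset.mem_smul_finset.1 hu
      exact ⟨u' * v, Finset.mul_mem_mul hu' hv.2,
        by simp [smul_eq_mul, mul_comm, mul_assoc, mul_left_comm]⟩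
    · obtain ⟨v', hv', rfl⟩ := Finset.mem_smul_finset.1 hv.1
      exact ⟨v' * u, Finset.mul_mem_mul hv' hu,
        by simp [smul_eq_mul, mul_comm, mul_assoc, mul_left_comm]⟩
  unfold alphaC
  set S : Set ℕ := {n | ∃ (H : Subgroup G) (g : G) (C : Finset G),
    (C : Set G) = g • (H : Set G) ∧ C ⊆ (a • A ∪ B) * (a • A ∩ B) ∧ C.card = n} with hS
  set T : Set ℕ := {n | ∃ (H : Subgroup G) (g : G) (C : Finset G),
    (C : Set G) = g • (H : Set G) ∧ C ⊆ A * B ∧ C.card = n} with hT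
  have hST : S ⊆ T := by
    rintro n ⟨H, g, C, hC, hCsub, rfl⟩
    refine ⟨H, a⁻¹ * g, a⁻¹ • C, ?_, ?_, Finset.card_smul_finset _ _⟩
    · rw [Finset.coe_smul_finset, hC, smul_smul]
    · intro y hy
      obtain ⟨z, hz, rfl⟩ := Finset.mem_smul_finset.1 hy
      have := hsub (hCsub hz)
      obtain ⟨w, hw, hwe⟩ := Finset.mem_smul_finset.1 this
      rwa [← hwe, inv_smul_smul]
  have hTbdd : BddAbove T := by
    refine ⟨(A * B).card, ?_⟩
    rintro n ⟨H, g, C, hC, hCsub, rfl⟩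
    exact Finset.card_le_card hCsub
  rcases S.eq_empty_or_nonempty with h | h
  · rw [h]
    simp
  · exact csSup_le_csSup hTbdd h hST
end

section
/- (Kemperman–Scherk) Let A, B be finite nonempty subsets of an abelian group G. If some element x of AB has only one representation as a product ab with a ∈ A, b ∈ B, then |AB| ≥ |A| + |B| − 1. Equivalently, if |AB| ≤ |A| + |B| − 2 then every element of AB has at least two representations, i.e., N_2(A,B) = AB. -/
open Finset Pointwise

variable {G : Type*} [CommGroup G] [DecidableEq G]

private lemma ks_aux : ∀ n : ℕ, ∀ A B : Finset G, ∀ x : G, B.card ≤ n → rep A B x = 1 →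
    A.card + B.card ≤ (A * B).card + 1 := by
  intro n
  induction n with
  | zero =>
    intro A B x hn h
    exfalso
    rw [rep, card_eq_one] at h
    obtain ⟨p, hp⟩ := h
    have hpmem : p ∈ (A ×ˢ B).filter (fun p => p.1 * p.2 = x) := hp ▸ mem_singleton_self p
    have hb := (mem_product.1 (mem_filter.1 hpmem).1).2
    have : 0 < B.card := card_pos.2 ⟨p.2, hb⟩
    omega
  | succ n ih =>
    intro A B x hn h
    rw [rep, card_eq_one] at h
    obtain ⟨p, hp⟩ := h
    have hpmem : p ∈ (A ×ˢ B).filter (fun p => p.1 * p.2 = x) := hp ▸ mem_singleton_self p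
    obtain ⟨hpA, hpB⟩ := mem_product.1 (mem_filter.1 hpmem).1
    have hpx : p.1 * p.2 = x := (mem_filter.1 hpmem).2
    have huniq : ∀ a b : G, a ∈ A → b ∈ B → a * b = x → a = p.1 ∧ b = p.2 := by
      intro a b ha hb hab
      have hm : (a, b) ∈ ({p} : Finset (G × G)) :=
        hp ▸ mem_filter.2 ⟨mem_product.2 ⟨ha, hb⟩, hab⟩
      have := mem_singleton.1 hm
      exact ⟨congrArg Prod.fst this, congrArg Prod.snd this⟩
    by_cases hBs : B ⊆ {p.2}
    · have hBeq : B = {p.2} := Subset.antisymm hBs (singleton_subset_iff.2 hpB)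
      rw [hBeq, mul_singleton, card_singleton, card_smul_finset]
    · obtain ⟨b, hbB, hbne⟩ : ∃ b ∈ B, b ≠ p.2 := by
        by_contra hc
        push_neg at hc
        exact hBs fun y hy => mem_singleton.2 (hc y hy)
      set e : G := p.1 * b⁻¹ with he
      have heb : e * b = p.1 := inv_mul_cancel_right p.1 b
      have hprod : (e * p.2) * b = x := by
        rw [← hpx, he, mul_right_comm, inv_mul_cancel_right]
      have hkey : e * p.2 ∉ A := by
        intro hcon
        have := (huniq _ _ hcon hbB hprod).2
        exact hbne this
      -- the Dyson transform
      have hsub : (A ∪ e • B) * (B ∩ e⁻¹ • A) ⊆ A * B := by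
        simpa using Finset.mulDysonETransform.subset e (A, B)
      have hcard : (A ∪ e • B).card + (B ∩ e⁻¹ • A).card = A.card + B.card := by
        simpa using Finset.mulDysonETransform.card e (A, B)
      have hbB' : b ∈ B ∩ e⁻¹ • A := by
        refine mem_inter.2 ⟨hbB, ?_⟩
        rw [mem_inv_smul_finset_iff, smul_eq_mul, heb]
        exact hpA
      have hp2B' : p.2 ∉ B ∩ e⁻¹ • A := by
        intro hcon
        have := (mem_inter.1 hcon).2
        rw [mem_inv_smul_finset_iff, smul_eq_mul] at this
        exact hkey this
      have hrep' : rep (A ∪ e • B) (B ∩ e⁻¹ • A) x = 1 := by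
        rw [rep, card_eq_one]
        refine ⟨(e * p.2, b), eq_singleton_iff_unique_mem.2 ⟨?_, ?_⟩⟩
        · refine mem_filter.2 ⟨mem_product.2 ⟨?_, hbB'⟩, hprod⟩
          exact mem_union_right _ (by
            rw [mem_smul_finset]; exact ⟨p.2, hpB, (smul_eq_mul e p.2).symm ▸ rfl⟩)
        · rintro ⟨a', b'⟩ hq
          have hq' := mem_filter.1 hq
          obtain ⟨ha', hb'⟩ := mem_product.1 hq'.1
          have hxq : a' * b' = x := hq'.2
          have hb'B : b' ∈ B := (mem_inter.1 hb').1
          have hb'A : e * b' ∈ A := by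
            have := (mem_inter.1 hb').2
            rwa [mem_inv_smul_finset_iff, smul_eq_mul] at this
          rcases mem_union.1 ha' with hA' | hEB
          · exfalso
            obtain ⟨h1, h2⟩ := huniq a' b' hA' hb'B hxq
            exact hp2B' (h2 ▸ hb')
          · rw [mem_smul_finset] at hEB
            obtain ⟨c, hcB, hce⟩ := hEB
            rw [smul_eq_mul] at hce
            have hce' : e * c = a' := hce
            have hxc : (e * b') * c = x := by
              rw [← hxq, ← hce']
              simp [mul_comm, mul_assoc, mul_left_comm]
            obtain ⟨h1, h2⟩ := huniq (e * b') c hb'A hcB hxc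
            have hb'b : b' = b := by
              have : e * b' = e * b := by rw [h1, heb]
              exact mul_left_cancel this
            have ha'e : a' = e * p.2 := by rw [← hce', h2]
            simp [ha'e, hb'b]
      have hlt : (B ∩ e⁻¹ • A).card < B.card :=
        card_lt_card ((ssubset_iff_of_subset inter_subset_left).2 ⟨p.2, hpB, hp2B'⟩)
      have hih := ih (A ∪ e • B) (B ∩ e⁻¹ • A) x (by omega) hrep'
      have := card_le_card hsub
      omega

theorem stmt6 (A B : Finset G) (hA : A.Nonempty) (hB : B.Nonempty) :
    ((∃ x ∈ A * B, rep A B x = 1) → A.card + B.card ≤ (A * B).card + 1) ∧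
    ((A * B).card + 2 ≤ A.card + B.card → N 2 A B = A * B) := by
  constructor
  · rintro ⟨x, _, hrep⟩
    exact ks_aux B.card A B x le_rfl hrep
  · intro hle
    refine Subset.antisymm (filter_subset _ _) ?_
    intro x hx
    rw [N, mem_filter]
    refine ⟨hx, ?_⟩
    have h1 : 1 ≤ rep A B x := by
      rw [Finset.mem_mul] at hx
      obtain ⟨a, ha, c, hc, hac⟩ := hx
      exact card_pos.2 ⟨(a, c), mem_filter.2 ⟨mem_product.2 ⟨ha, hc⟩, hac⟩⟩
    by_contra hlt
    push_neg at hlt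
    have hone : rep A B x = 1 := by omega
    have := ks_aux B.card A B x le_rfl hone
    omega
end

section
/- (Pollard) Let p be a prime, A and B nonempty subsets of Z/pZ, and t ≤ min(|A|,|B|). Then the sum over i from 1 to t of |N_i(A,B)| is at least t·min(p, |A| + |B| − t). -/
open Finset

/-- Number of representations of `x` as a sum `a + b` with `a ∈ A`, `b ∈ B` in `ZMod p`. -/
def repA {p : ℕ} [NeZero p] (A B : Finset (ZMod p)) (x : ZMod p) : ℕ :=
  ((A ×ˢ B).filter (fun q => q.1 + q.2 = x)).card

/-- Elements having at least `i` representations. -/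
def NA {p : ℕ} [NeZero p] (i : ℕ) (A B : Finset (ZMod p)) : Finset (ZMod p) :=
  Finset.univ.filter (fun x => i ≤ repA A B x)

section PollardAux

variable {p : ℕ} [NeZero p]

lemma repA_comm (A B : Finset (ZMod p)) (x : ZMod p) : repA A B x = repA B A x := by
  unfold repA
  apply Finset.card_bij (fun q _ => q.swap)
  · rintro ⟨a,b⟩ hq
    simp only [mem_filter, mem_product] at hq ⊢
    exact ⟨⟨hq.1.2, hq.1.1⟩, by rw [← hq.2]; exact add_comm _ _⟩
  · rintro ⟨a,b⟩ _ ⟨c,d⟩ _ h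
    simpa [Prod.ext_iff, and_comm] using h
  · rintro ⟨a,b⟩ hq
    refine ⟨⟨b,a⟩, ?_, rfl⟩
    simp only [mem_filter, mem_product] at hq ⊢
    exact ⟨⟨hq.1.2, hq.1.1⟩, by rw [← hq.2]; exact add_comm _ _⟩

lemma repA_le_right (A B : Finset (ZMod p)) (x : ZMod p) : repA A B x ≤ B.card := by
  unfold repA
  apply Finset.card_le_card_of_injOn (fun q => q.2)
  · rintro ⟨a,b⟩ hq
    simp only [mem_coe, mem_filter, mem_product] at hq
    exact hq.1.2
  · rintro ⟨a,b⟩ ha ⟨c,d⟩ hc h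
    simp only [mem_coe, mem_filter, mem_product] at ha hc
    simp only at h
    subst h
    have : a = c := by
      have := ha.2.trans hc.2.symm
      exact add_right_cancel this
    simp [this]

lemma sum_repA (A B : Finset (ZMod p)) : ∑ x : ZMod p, repA A B x = A.card * B.card := by
  rw [← Finset.card_product]
  exact (Finset.card_eq_sum_card_fiberwise (fun q _ => Finset.mem_univ (q.1 + q.2))).symm

lemma repA_union_left {A₁ A₂ : Finset (ZMod p)} (h : Disjoint A₁ A₂) (B : Finset (ZMod p))
    (x : ZMod p) : repA (A₁ ∪ A₂) B x = repA A₁ B x + repA A₂ B x := by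
  unfold repA
  rw [← Finset.card_union_of_disjoint, ← Finset.filter_union, ← Finset.union_product]
  · exact Finset.disjoint_filter_filter (Finset.disjoint_product.mpr (Or.inl h))

lemma repA_mono_left {A₁ A₂ : Finset (ZMod p)} (h : A₁ ⊆ A₂) (B : Finset (ZMod p)) (x : ZMod p) :
    repA A₁ B x ≤ repA A₂ B x :=
  Finset.card_le_card (Finset.filter_subset_filter _ (Finset.product_subset_product_left h))

lemma repA_image_left (A B : Finset (ZMod p)) (e x : ZMod p) :
    repA (A.image (· + e)) B x = repA A B (x - e) := by
  unfold repA
  apply Finset.card_bij (fun q _ => (q.1 - e, q.2))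
  · rintro ⟨u,b⟩ hq
    simp only [mem_filter, mem_product, mem_image] at hq ⊢
    obtain ⟨⟨⟨a, ha, rfl⟩, hb⟩, hsum⟩ := hq
    refine ⟨⟨by simpa using ha, hb⟩, by linear_combination hsum⟩
  · rintro ⟨u,b⟩ _ ⟨u',b'⟩ _ h
    rw [Prod.mk.injEq] at h ⊢
    exact ⟨by linear_combination h.1, h.2⟩
  · rintro ⟨a,b⟩ hq
    simp only [mem_filter, mem_product, mem_image] at hq
    refine ⟨(a + e, b), ?_, by simp⟩
    simp only [mem_filter, mem_product, mem_image]
    refine ⟨⟨⟨a, hq.1.1, rfl⟩, hq.1.2⟩, ?_⟩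
    have := hq.2
    linear_combination this

lemma repA_union_right (A : Finset (ZMod p)) {B₁ B₂ : Finset (ZMod p)} (h : Disjoint B₁ B₂)
    (x : ZMod p) : repA A (B₁ ∪ B₂) x = repA A B₁ x + repA A B₂ x := by
  rw [repA_comm, repA_union_left h, repA_comm, repA_comm B₂]

lemma repA_univ_left (B : Finset (ZMod p)) (x : ZMod p) :
    repA (univ : Finset (ZMod p)) B x = B.card := by
  unfold repA
  apply Finset.card_bij (fun q _ => q.2)
  · rintro ⟨a,b⟩ hq
    simp only [mem_filter, mem_product] at hq
    exact hq.1.2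
  · rintro ⟨a,b⟩ ha ⟨c,d⟩ hc h
    simp only [mem_filter, mem_product] at ha hc
    simp only at h
    subst h
    have : a = c := add_right_cancel (ha.2.trans hc.2.symm)
    simp [this]
  · intro b hb
    refine ⟨(x - b, b), ?_, rfl⟩
    simp [mem_filter, mem_product, hb]

lemma sum_card_NA (A B : Finset (ZMod p)) (t : ℕ) :
    ∑ i ∈ Finset.Icc 1 t, (NA i A B).card = ∑ x : ZMod p, min (repA A B x) t := by
  unfold NA
  have h1 : ∀ i, (Finset.univ.filter (fun x => i ≤ repA A B x)).card
      = ∑ x : ZMod p, if i ≤ repA A B x then 1 else 0 := by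
    intro i
    rw [Finset.card_filter]
  simp only [h1]
  rw [Finset.sum_comm]
  congr 1
  ext x
  rw [← Finset.card_filter]
  have : (Finset.Icc 1 t).filter (fun i => i ≤ repA A B x) = Finset.Icc 1 (min (repA A B x) t) := by
    ext i
    simp only [mem_filter, mem_Icc, le_min_iff]
    omega
  rw [this, Nat.card_Icc]
  omega

lemma eq_univ_of_shift (hp : p.Prime) {A : Finset (ZMod p)} (hA : A.Nonempty) {g : ZMod p}
    (hg : g ≠ 0) (h : ∀ a ∈ A, g + a ∈ A) : A = univ := by
  haveI : Fact p.Prime := ⟨hp⟩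
  obtain ⟨a0, ha0⟩ := hA
  have hk : ∀ k : ℕ, (k : ZMod p) * g + a0 ∈ A := by
    intro k
    induction k with
    | zero => simpa using ha0
    | succ k ih =>
      have := h _ ih
      push_cast
      convert this using 1
      ring
  apply Finset.eq_univ_of_forall
  intro x
  have key : ((((x - a0) * g⁻¹).val : ℕ) : ZMod p) = (x - a0) * g⁻¹ := by
    rw [ZMod.natCast_val, ZMod.cast_id]
  have := hk ((x - a0) * g⁻¹).val
  rw [key] at this
  have hxa : (x - a0) * g⁻¹ * g + a0 = x := by
    field_simp
    ring
  rwa [hxa] at this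

lemma pollard_arith {p s t n : ℕ} (h2 : n < t) (h3 : t + n ≤ s) :
    t * min p (s - t) ≤ (s - n) * n + (t - n) * min p (s - n - t) := by
  have e1 : t ≤ s := by omega
  have e2 : n ≤ s := by omega
  have e3 : n ≤ t := by omega
  have e4 : t ≤ s - n := by omega
  zify [e1, e2, e3, e4, Nat.cast_min]
  rcases le_total (p : ℤ) ((s : ℤ) - n - t) with h | h
  · rw [min_eq_left h, min_eq_left (by linarith)]
    have key : (p : ℤ) * n ≤ ((s : ℤ) - n) * n := by
      apply mul_le_mul_of_nonneg_right _ (by positivity)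
      have : (0:ℤ) ≤ (t:ℤ) := by positivity
      linarith
    nlinarith [key]
  · rw [min_eq_right h]
    have ident : ((s:ℤ) - n) * n + ((t:ℤ) - n) * ((s:ℤ) - n - t) = (t:ℤ) * ((s:ℤ) - t) := by
      ring
    rcases le_total (p : ℤ) ((s : ℤ) - t) with h' | h'
    · rw [min_eq_left h']
      have : (t:ℤ) * p ≤ (t:ℤ) * ((s:ℤ) - t) :=
        mul_le_mul_of_nonneg_left h' (by positivity)
      linarith
    · rw [min_eq_right h']
      linarith

/-- The core of Pollard's theorem, proved by strong induction following Pollard's original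
argument: either the Chowla/Dyson transform applies, or a transform-and-split applies, or the
set `A` is invariant under a nonzero shift and hence is everything. -/
lemma pollard_main (hp : p.Prime) :
    ∀ m : ℕ, ∀ A B : Finset (ZMod p), ∀ t : ℕ,
      (A.card + B.card) * (p + 1) + B.card ≤ m →
      A.Nonempty → B.Nonempty → 1 ≤ t → t ≤ A.card → t ≤ B.card →
      t * min p (A.card + B.card - t) ≤ ∑ x : ZMod p, min (repA A B x) t := by
  intro m
  induction m with
  | zero =>
    intro A B t hm hA hB ht htA htB
    exact absurd hm (by
      have h1 : 0 < B.card := Finset.card_pos.mpr hB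
      omega)
  | succ m ih =>
    intro A B t hm hA hB ht htA htB
    have hBp : B.card ≤ p := by simpa [ZMod.card] using Finset.card_le_univ B
    have hAp : A.card ≤ p := by simpa [ZMod.card] using Finset.card_le_univ A
    by_cases hbt : B.card ≤ t
    · have hsum : ∑ x : ZMod p, min (repA A B x) t = A.card * B.card := by
        rw [← sum_repA A B]
        exact Finset.sum_congr rfl fun x _ => min_eq_left ((repA_le_right A B x).trans hbt)
      rw [hsum]
      have h1 : A.card + B.card - t = A.card := by omega
      rw [h1]
      calc t * min p A.card ≤ B.card * A.card := Nat.mul_le_mul htB (min_le_right _ _)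
        _ = A.card * B.card := Nat.mul_comm _ _
    · push_neg at hbt
      by_cases hex : ∃ aa ∈ A, ∃ bb ∈ B, ∃ z ∈ B, z + (aa - bb) ∉ A
      · obtain ⟨aa, haa, bb, hbb, z0, hz0, hz0n⟩ := hex
        set e := aa - bb with he
        set B₁ := B.filter (fun z => z + e ∈ A) with hB₁def
        set B₂ := B.filter (fun z => ¬ (z + e ∈ A)) with hB₂def
        have hbbB₁ : bb ∈ B₁ := by
          rw [hB₁def, mem_filter]
          refine ⟨hbb, ?_⟩
          have h5 : bb + e = aa := by rw [he]; ring
          rw [h5]; exact haa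
        have hz0B₂ : z0 ∈ B₂ := by
          rw [hB₂def, mem_filter]; exact ⟨hz0, hz0n⟩
        have hdisj : Disjoint B₁ B₂ := disjoint_filter_filter_not B B _
        have hunion : B₁ ∪ B₂ = B := filter_union_filter_not_eq _ B
        have hcards : B₁.card + B₂.card = B.card := by
          rw [← Finset.card_union_of_disjoint hdisj, hunion]
        have hn1 : 1 ≤ B₁.card := Finset.card_pos.mpr ⟨bb, hbbB₁⟩
        have hB₂ne : B₂.Nonempty := ⟨z0, hz0B₂⟩
        have hnb : B₁.card < B.card := by
          have := Finset.card_pos.mpr hB₂ne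
          omega
        set T₁ := B₁.image (· + e) with hT₁def
        set T₂ := B₂.image (· + e) with hT₂def
        have hT₁A : T₁ ⊆ A := by
          intro u hu
          rw [hT₁def, mem_image] at hu
          obtain ⟨z, hz, rfl⟩ := hu
          rw [hB₁def, mem_filter] at hz
          exact hz.2
        have hT₂A : Disjoint A T₂ := by
          rw [Finset.disjoint_right]
          intro u hu
          rw [hT₂def, mem_image] at hu
          obtain ⟨z, hz, rfl⟩ := hu
          rw [hB₂def, mem_filter] at hz
          exact hz.2
        have hinj : Function.Injective (· + e) := add_left_injective e
        have hcT₁ : T₁.card = B₁.card := by rw [hT₁def, Finset.card_image_of_injective _ hinj]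
        have hcT₂ : T₂.card = B₂.card := by rw [hT₂def, Finset.card_image_of_injective _ hinj]
        set A' := A ∪ T₂ with hA'def
        have hcA' : A'.card = A.card + B₂.card := by
          rw [hA'def, Finset.card_union_of_disjoint hT₂A, hcT₂]
        have hw : ∀ x, repA T₂ B₁ x = repA T₁ B₂ x := by
          intro x
          rw [hT₂def, repA_image_left, repA_comm, ← repA_image_left, ← hT₁def]
        have hA'rep : ∀ x, repA A' B₁ x = repA A B₁ x + repA T₁ B₂ x := by
          intro x
          rw [hA'def, repA_union_left hT₂A, hw]
        have hArep : ∀ x, repA A B x = repA A B₁ x + repA A B₂ x := by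
          intro x
          rw [← hunion, repA_union_right _ hdisj]
        have hwle : ∀ x, repA T₁ B₂ x ≤ repA A B₂ x := fun x => repA_mono_left hT₁A _ _
        have hA'card2 : A'.card + B₁.card = A.card + B.card := by omega
        by_cases htn : t ≤ B₁.card
        · -- Dyson/Chowla transform case
          have hA'ne : A'.Nonempty := hA.mono Finset.subset_union_left
          have hB₁ne : B₁.Nonempty := ⟨bb, hbbB₁⟩
          have hmeas : (A'.card + B₁.card) * (p + 1) + B₁.card ≤ m := by
            rw [hA'card2]
            omega
          have htA' : t ≤ A'.card := htA.trans (Finset.card_le_card Finset.subset_union_left)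
          have hIH := ih A' B₁ t hmeas hA'ne hB₁ne ht htA' htn
          rw [hA'card2] at hIH
          refine hIH.trans (Finset.sum_le_sum ?_)
          intro x _
          refine min_le_min ?_ le_rfl
          rw [hA'rep, hArep]
          exact Nat.add_le_add_left (hwle x) _
        · -- transform-and-split case
          push_neg at htn
          set A'' := A \ T₁ with hA''def
          have hcA'' : A''.card = A.card - B₁.card := by
            rw [hA''def, Finset.card_sdiff_of_subset hT₁A, hcT₁]
          have hA''split : ∀ x, repA A B₂ x = repA A'' B₂ x + repA T₁ B₂ x := by
            intro x
            conv_lhs => rw [← Finset.sdiff_union_of_subset hT₁A]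
            rw [repA_union_left Finset.sdiff_disjoint]
          have hkey : ∀ x : ZMod p,
              min (repA A' B₁ x) B₁.card + min (repA A'' B₂ x) (t - B₁.card)
                ≤ min (repA A B x) t := by
            intro x
            have h1 := hA'rep x
            have h2 := hArep x
            have h3 := hA''split x
            have h4 := hwle x
            omega
          have hs1 : ∑ x : ZMod p, min (repA A' B₁ x) B₁.card = A'.card * B₁.card := by
            have h6 : ∀ x : ZMod p, min (repA A' B₁ x) B₁.card = repA A' B₁ x :=
              fun x => min_eq_left (repA_le_right A' B₁ x)
            rw [Finset.sum_congr rfl fun x _ => h6 x, sum_repA]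
          have hA''ne : A''.Nonempty := by
            rw [← Finset.card_pos, hcA'']
            omega
          have hmeas2 : (A''.card + B₂.card) * (p + 1) + B₂.card ≤ m := by
            have hstep : (A''.card + B₂.card + 1) * (p + 1) ≤ (A.card + B.card) * (p + 1) :=
              Nat.mul_le_mul_right _ (by omega)
            have hx : (A''.card + B₂.card + 1) * (p + 1)
                = (A''.card + B₂.card) * (p + 1) + (p + 1) := by ring
            rw [hx] at hstep
            have hB₂p : B₂.card ≤ p := le_trans (by omega) hBp
            omega
          have hIH2 := ih A'' B₂ (t - B₁.card) hmeas2 hA''ne hB₂ne (by omega)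
            (by omega) (by omega)
          have harith := pollard_arith (p := p) (s := A.card + B.card) (t := t) (n := B₁.card)
            htn (by omega)
          have hrw : A''.card + B₂.card - (t - B₁.card) = A.card + B.card - B₁.card - t := by
            omega
          rw [hrw] at hIH2
          calc t * min p (A.card + B.card - t)
              ≤ (A.card + B.card - B₁.card) * B₁.card
                + (t - B₁.card) * min p (A.card + B.card - B₁.card - t) := harith
            _ ≤ ∑ x : ZMod p, min (repA A' B₁ x) B₁.card
                + ∑ x : ZMod p, min (repA A'' B₂ x) (t - B₁.card) := by
                rw [hs1]
                have : A'.card = A.card + B.card - B₁.card := by omega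
                rw [this]
                exact Nat.add_le_add_left hIH2 _
            _ = ∑ x : ZMod p, (min (repA A' B₁ x) B₁.card
                + min (repA A'' B₂ x) (t - B₁.card)) := (Finset.sum_add_distrib).symm
            _ ≤ ∑ x : ZMod p, min (repA A B x) t := Finset.sum_le_sum fun x _ => hkey x
      · -- no transform available: A is shift-invariant, hence all of ZMod p
        push_neg at hex
        have h2 : 1 < B.card := lt_of_le_of_lt ht hbt
        obtain ⟨b1, hb1, b2, hb2, hne⟩ := Finset.one_lt_card.mp h2
        have hshift : ∀ a ∈ A, (b1 - b2) + a ∈ A := by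
          intro a ha
          have h3 := hex a ha b2 hb2 b1 hb1
          have h4 : b1 + (a - b2) = (b1 - b2) + a := by ring
          rwa [h4] at h3
        have hAuniv : A = univ := eq_univ_of_shift hp hA (sub_ne_zero.mpr hne) hshift
        have hrep : ∀ x, repA A B x = B.card := fun x => by rw [hAuniv, repA_univ_left]
        have hsum : ∑ x : ZMod p, min (repA A B x) t = p * t := by
          have h7 : ∀ x : ZMod p, min (repA A B x) t = t := fun x => by
            rw [hrep]; exact min_eq_right htB
          rw [Finset.sum_congr rfl fun x _ => h7 x, Finset.sum_const, Finset.card_univ,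
            ZMod.card, smul_eq_mul]
        rw [hsum]
        calc t * min p (A.card + B.card - t) ≤ t * p :=
              Nat.mul_le_mul_left t (min_le_left _ _)
          _ = p * t := Nat.mul_comm _ _

end PollardAux

theorem stmt7 {p : ℕ} [NeZero p] (hp : p.Prime) (A B : Finset (ZMod p)) (hA : A.Nonempty)
    (hB : B.Nonempty) (t : ℕ) (htA : t ≤ A.card) (htB : t ≤ B.card) :
    (t : ℤ) * min (p : ℤ) ((A.card : ℤ) + B.card - t) ≤
      ∑ i ∈ Finset.Icc 1 t, ((NA i A B).card : ℤ) := by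
  rcases Nat.eq_zero_or_pos t with rfl | ht
  · simp
  · have H := pollard_main hp ((A.card + B.card) * (p + 1) + B.card) A B t le_rfl hA hB ht htA htB
    have hcast : ∑ i ∈ Finset.Icc 1 t, ((NA i A B).card : ℤ)
        = ((∑ x : ZMod p, min (repA A B x) t : ℕ) : ℤ) := by
      rw [← sum_card_NA]
      push_cast
      rfl
    rw [hcast]
    have htab : t ≤ A.card + B.card := le_trans htA (Nat.le_add_right _ _)
    have hL : (t : ℤ) * min (p : ℤ) ((A.card : ℤ) + B.card - t)
        = ((t * min p (A.card + B.card - t) : ℕ) : ℤ) := by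
      push_cast [Nat.cast_sub htab]
      ring
    rw [hL]
    exact Nat.cast_le.mpr H
end

section
/- (Green–Ruzsa) Let G be a finite abelian group, A, B nonempty subsets, and t ≤ min(|A|,|B|). Then the sum over i from 1 to t of |N_i(A,B)| is at least t·min(|G|, |A| + |B| − μ(G) − t + 1), where μ(G) is the cardinality of the largest proper subgroup of G. -/
open Finset Pointwise

variable {G : Type*} [CommGroup G] [DecidableEq G]

private lemma mem_smul_iff' (g x : G) (A : Finset G) : x ∈ g • A ↔ g⁻¹ * x ∈ A := by
  rw [Finset.mem_smul_finset]
  constructor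
  · rintro ⟨y, hy, rfl⟩; simpa using hy
  · intro h; exact ⟨g⁻¹ * x, h, by show g * (g⁻¹ * x) = x; group⟩

private lemma mem_inv_smul_iff' (g x : G) (A : Finset G) : x ∈ g⁻¹ • A ↔ g * x ∈ A := by
  rw [mem_smul_iff', inv_inv]

private lemma rep_eq_card_inter (A B : Finset G) (x : G) :
    rep A B x = (A ∩ x • B⁻¹).card := by
  unfold rep
  apply Finset.card_bij (fun p _ => p.1)
  · intro p hp
    simp only [mem_filter, mem_product] at hp
    obtain ⟨⟨h1, h2⟩, h3⟩ := hp
    refine mem_inter.2 ⟨h1, ?_⟩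
    rw [mem_smul_iff', Finset.mem_inv']
    have he : (x⁻¹ * p.1)⁻¹ = p.2 := by rw [← h3]; group
    rw [he]; exact h2
  · intro p hp q hq h
    simp only [mem_filter, mem_product] at hp hq
    have h2 : p.2 = q.2 := by
      have := hp.2.trans hq.2.symm
      rw [h] at this
      exact mul_left_cancel this
    exact Prod.ext h h2
  · intro a ha
    obtain ⟨h1, h2⟩ := mem_inter.1 ha
    rw [mem_smul_iff', Finset.mem_inv'] at h2
    refine ⟨(a, a⁻¹ * x), ?_, rfl⟩
    simp only [mem_filter, mem_product]
    have he : (x⁻¹ * a)⁻¹ = a⁻¹ * x := by group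
    rw [he] at h2
    exact ⟨⟨h1, h2⟩, by group⟩

private lemma rep_transform (A B : Finset G) (e x : G) :
    rep (A ∪ e • B) (B ∩ e⁻¹ • A) x + rep (A \ e • B) (B \ e⁻¹ • A) x ≤ rep A B x := by
  classical
  set T := (A ×ˢ B).filter (fun p => p.1 * p.2 = x) with hT
  set T1 := (((A ∪ e • B) ×ˢ (B ∩ e⁻¹ • A)).filter (fun p => p.1 * p.2 = x)) with hT1
  set T3 := (((A \ e • B) ×ˢ (B \ e⁻¹ • A)).filter (fun p => p.1 * p.2 = x)) with hT3
  have hT3sub : T3 ⊆ T := by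
    apply filter_subset_filter
    exact product_subset_product sdiff_subset sdiff_subset
  have key : T1.card ≤ (T \ T3).card := by
    apply Finset.card_le_card_of_injOn (fun p => if p.1 ∈ A then p else (e * p.2, e⁻¹ * p.1))
    · intro p hp
      simp only [hT1, mem_coe, mem_filter, mem_product, mem_union, mem_inter] at hp
      obtain ⟨⟨ha, hb, hb'⟩, hx⟩ := hp
      rw [mem_inv_smul_iff'] at hb'
      simp only [mem_coe, mem_sdiff, hT3, hT, mem_filter, mem_product]
      by_cases h1 : p.1 ∈ A
      · simp only [if_pos h1]
        refine ⟨⟨⟨h1, hb⟩, hx⟩, ?_⟩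
        rintro ⟨⟨-, hb2⟩, -⟩
        exact hb2.2 ((mem_inv_smul_iff' e p.2 A).2 hb')
      · simp only [if_neg h1]
        have ha2 : e⁻¹ * p.1 ∈ B := by
          rcases ha with h | h
          · exact absurd h h1
          · rwa [mem_smul_iff'] at h
        refine ⟨⟨⟨hb', ha2⟩, ?_⟩, ?_⟩
        · rw [← hx]; simp [mul_assoc, mul_comm, mul_left_comm]
        · rintro ⟨⟨ha3, -⟩, -⟩
          exact ha3.2 (smul_mem_smul_finset hb)
    · intro p hp q hq hpq
      simp only [hT1, mem_coe, mem_filter, mem_product, mem_union, mem_inter] at hp hq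
      obtain ⟨⟨hpa, hpb, hpb'⟩, hpx⟩ := hp
      obtain ⟨⟨hqa, hqb, hqb'⟩, hqx⟩ := hq
      rw [mem_inv_smul_iff'] at hpb' hqb'
      by_cases h1 : p.1 ∈ A <;> by_cases h2 : q.1 ∈ A <;>
        simp only [if_pos, if_neg, h1, h2, if_true, if_false] at hpq
      · exact hpq
      · exfalso
        have hsnd : p.2 = e⁻¹ * q.1 := congrArg Prod.snd hpq
        apply h2
        have : e * p.2 = q.1 := by rw [hsnd]; group
        rwa [this] at hpb'
      · exfalso
        have hsnd : q.2 = e⁻¹ * p.1 := (congrArg Prod.snd hpq).symm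
        apply h1
        have : e * q.2 = p.1 := by rw [hsnd]; group
        rwa [this] at hqb'
      · have e1 : e * p.2 = e * q.2 := congrArg Prod.fst hpq
        have e2 : e⁻¹ * p.1 = e⁻¹ * q.1 := congrArg Prod.snd hpq
        exact Prod.ext (mul_left_cancel e2) (mul_left_cancel e1)
  have hcard : T3.card ≤ T.card := card_le_card hT3sub
  have hsd : (T \ T3).card = T.card - T3.card := card_sdiff_of_subset hT3sub
  unfold rep
  rw [← hT, ← hT1, ← hT3]
  omega

private lemma card_inter_lb [Fintype G] (A C : Finset G) :
    (A.card : ℤ) + C.card - Fintype.card G ≤ ((A ∩ C).card : ℤ) := by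
  have h := Finset.card_inter_add_card_union A C
  have h2 : (A ∪ C).card ≤ Fintype.card G := Finset.card_le_univ (A ∪ C)
  push_cast
  omega

private lemma rep_lb [Fintype G] (A B : Finset G) (x : G) :
    (A.card : ℤ) + B.card - Fintype.card G ≤ (rep A B x : ℤ) := by
  rw [rep_eq_card_inter]
  have := card_inter_lb A (x • B⁻¹)
  rwa [card_smul_finset, Finset.card_inv] at this

private lemma sum_N_eq [Fintype G] (A B : Finset G) (t : ℕ) :
    ∑ i ∈ Finset.Icc 1 t, (N i A B).card = ∑ x : G, min t (rep A B x) := by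
  have hN : ∀ i ∈ Finset.Icc 1 t,
      (N i A B).card = (univ.filter (fun x => i ≤ rep A B x)).card := by
    intro i hi
    rw [mem_Icc] at hi
    congr 1
    ext y
    simp only [N, mem_filter, mem_univ, true_and]
    constructor
    · rintro ⟨-, h⟩; exact h
    · intro h
      refine ⟨?_, h⟩
      have hpos : 0 < rep A B y := lt_of_lt_of_le hi.1 h
      rw [rep, card_pos] at hpos
      obtain ⟨p, hp⟩ := hpos
      simp only [mem_filter, mem_product] at hp
      exact hp.2 ▸ mul_mem_mul hp.1.1 hp.1.2
  rw [sum_congr rfl hN]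
  have hswap : ∀ i : ℕ, (univ.filter (fun x => i ≤ rep A B x)).card
      = ∑ x : G, if i ≤ rep A B x then 1 else 0 := by
    intro i
    rw [Finset.card_filter]
  simp only [hswap]
  rw [Finset.sum_comm]
  apply sum_congr rfl
  intro x _
  have : ((Finset.Icc 1 t).filter (fun i => i ≤ rep A B x)) = Finset.Icc 1 (min t (rep A B x)) := by
    ext i
    simp only [mem_filter, mem_Icc]
    omega
  calc (∑ i ∈ Finset.Icc 1 t, if i ≤ rep A B x then (1:ℕ) else 0)
      = ((Finset.Icc 1 t).filter (fun i => i ≤ rep A B x)).card := (Finset.card_filter _ _).symm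
    _ = min t (rep A B x) := by rw [this, Nat.card_Icc]; omega

private lemma main_ind [Fintype G] (μ : ℕ) (hμ1 : 1 ≤ μ)
    (hμtop : ∀ K : Subgroup G, K ≠ ⊤ → Nat.card K ≤ μ) :
    ∀ (n t : ℕ) (A B : Finset G), t + B.card ≤ n → A.Nonempty → B.Nonempty → 1 ≤ t →
      t ≤ A.card → t ≤ B.card →
      (t : ℤ) * min (Fintype.card G : ℤ) ((A.card : ℤ) + B.card - μ - t + 1) ≤
        ∑ x : G, (min t (rep A B x) : ℤ) := by
  intro n
  induction n using Nat.strongRecOn with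
  | ind n IH =>
  intro t A B hn hA hB ht htA htB
  have hsum_nonneg : (0:ℤ) ≤ ∑ x : G, (min t (rep A B x) : ℤ) :=
    Finset.sum_nonneg fun x _ => by positivity
  by_cases hm : (A.card : ℤ) + B.card - μ - t + 1 ≤ 0
  · have h1 : min (Fintype.card G : ℤ) ((A.card : ℤ) + B.card - μ - t + 1) ≤ 0 :=
      le_trans (min_le_right _ _) hm
    have h2 := mul_nonpos_of_nonneg_of_nonpos (by positivity : (0:ℤ) ≤ (t:ℤ)) h1
    linarith
  push_neg at hm
  by_cases hbig : (Fintype.card G : ℤ) + t ≤ (A.card : ℤ) + B.card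
  · have hall : ∀ x : G, (min t (rep A B x) : ℤ) = t := by
      intro x
      have h1 := rep_lb A B x
      exact min_eq_left (by linarith)
    calc (t:ℤ) * min (Fintype.card G : ℤ) ((A.card : ℤ) + B.card - μ - t + 1)
        ≤ (t:ℤ) * (Fintype.card G : ℤ) :=
          mul_le_mul_of_nonneg_left (min_le_left _ _) (by positivity)
      _ = ∑ _x : G, (t:ℤ) := by rw [Finset.sum_const, Finset.card_univ]; ring
      _ = ∑ x : G, (min t (rep A B x) : ℤ) := (Finset.sum_congr rfl fun x _ => (hall x)).symm
  push_neg at hbig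
  by_cases hfull : ∀ e : G, (A ∩ e • B).Nonempty → e • B ⊆ A
  · -- case "all full"
    have hrepAB : ∀ x ∈ A * B, B.card ≤ rep A B x := by
      intro x hx
      rw [Finset.mem_mul] at hx
      obtain ⟨a, ha, b, hb, rfl⟩ := hx
      have hsub : (a * b) • B⁻¹ ⊆ A := by
        intro y hy
        rw [mem_smul_iff', Finset.mem_inv'] at hy
        have hmem : a ∈ (y * b⁻¹) • B := by
          rw [mem_smul_iff']
          have hgy : (y * b⁻¹)⁻¹ * a = ((a*b)⁻¹ * y)⁻¹ := by
            simp [mul_inv_rev, inv_inv, mul_assoc, mul_comm, mul_left_comm]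
          rw [hgy]; exact hy
        have hy2 : y ∈ (y * b⁻¹) • B := by
          rw [mem_smul_iff']
          have hgy : (y * b⁻¹)⁻¹ * y = b := by group
          rw [hgy]; exact hb
        exact hfull _ ⟨a, mem_inter.2 ⟨ha, hmem⟩⟩ hy2
      have hcalc : B.card ≤ (A ∩ (a*b) • B⁻¹).card := by
        rw [Finset.inter_eq_right.2 hsub, card_smul_finset, Finset.card_inv]
      rw [rep_eq_card_inter]
      exact hcalc
    have hSt : (t:ℤ) * ((A*B).card : ℤ) ≤ ∑ x : G, (min t (rep A B x) : ℤ) := by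
      calc (t:ℤ) * ((A*B).card : ℤ) = ∑ _x ∈ A*B, (t:ℤ) := by
            rw [Finset.sum_const]; ring
        _ ≤ ∑ x ∈ A*B, (min t (rep A B x) : ℤ) := by
            apply Finset.sum_le_sum
            intro x hx
            have h1 := hrepAB x hx
            exact le_min le_rfl (by exact_mod_cast le_trans htB h1)
        _ ≤ ∑ x : G, (min t (rep A B x) : ℤ) := by
            apply Finset.sum_le_sum_of_subset_of_nonneg (subset_univ _)
            intro x _ _
            positivity
    obtain ⟨b0, hb0⟩ := hB
    have hKmem : ∀ b ∈ B, ∀ b' ∈ B, b * b'⁻¹ ∈ MulAction.stabilizer G A := by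
      intro b hb b' hb'
      have hsub : (b * b'⁻¹) • A ⊆ A := by
        intro y hy
        rw [mem_smul_iff'] at hy
        have hmem : ((b*b'⁻¹)⁻¹ * y) ∈ (y * b⁻¹) • B := by
          rw [mem_smul_iff']
          have hgy : (y * b⁻¹)⁻¹ * ((b*b'⁻¹)⁻¹ * y) = b' := by
            simp [mul_inv_rev, inv_inv, mul_assoc, mul_comm, mul_left_comm]
          rw [hgy]; exact hb'
        have hy2 : y ∈ (y * b⁻¹) • B := by
          rw [mem_smul_iff']
          have hgy : (y * b⁻¹)⁻¹ * y = b := by group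
          rw [hgy]; exact hb
        exact hfull _ ⟨_, mem_inter.2 ⟨hy, hmem⟩⟩ hy2
      have heq : (b * b'⁻¹) • A = A :=
        Finset.eq_of_subset_of_card_le hsub (le_of_eq (card_smul_finset _ _).symm)
      exact MulAction.mem_stabilizer_iff.2 heq
    by_cases hKtop : MulAction.stabilizer G A = (⊤ : Subgroup G)
    · have hAuniv : A = univ := by
        obtain ⟨a0, ha0⟩ := hA
        ext z; simp only [mem_univ, iff_true]
        have hz : (z * a0⁻¹) • A = A := by
          have hmem : (z * a0⁻¹) ∈ MulAction.stabilizer G A := by rw [hKtop]; trivial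
          exact MulAction.mem_stabilizer_iff.1 hmem
        rw [← hz, mem_smul_iff']
        have : (z * a0⁻¹)⁻¹ * z = a0 := by group
        rw [this]; exact ha0
      have hABuniv : A * B = univ := by
        apply Finset.eq_univ_of_forall
        intro z
        rw [Finset.mem_mul]
        exact ⟨z * b0⁻¹, by rw [hAuniv]; exact mem_univ _, b0, hb0, by group⟩
      rw [hABuniv, card_univ] at hSt
      calc (t:ℤ) * min (Fintype.card G : ℤ) ((A.card : ℤ) + B.card - μ - t + 1)
          ≤ (t:ℤ) * (Fintype.card G : ℤ) :=
            mul_le_mul_of_nonneg_left (min_le_left _ _) (by positivity)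
        _ ≤ _ := hSt
    · have hcardK : Nat.card (MulAction.stabilizer G A) ≤ μ := hμtop _ hKtop
      have hBsub : B.card ≤ μ := by
        have hinj : (B.image (fun b => b * b0⁻¹)).card = B.card :=
          Finset.card_image_of_injective _ (fun u v huv => by
            simpa using mul_right_cancel huv)
        set KF : Finset G := univ.filter (fun g => g • A = A) with hKF
        have himage : B.image (fun b => b * b0⁻¹) ⊆ KF := by
          intro z hz
          simp only [Finset.mem_image] at hz
          obtain ⟨b, hb, rfl⟩ := hz
          rw [hKF, mem_filter]
          exact ⟨mem_univ _, MulAction.mem_stabilizer_iff.1 (hKmem b hb b0 hb0)⟩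
        have h2 := Finset.card_le_card himage
        rw [hinj] at h2
        have h3 : Nat.card (MulAction.stabilizer G A) = KF.card := by
          rw [← SetLike.coe_sort_coe, Nat.card_coe_set_eq]
          have hset : ((MulAction.stabilizer G A : Subgroup G) : Set G) = (KF : Set G) := by
            ext g
            simp only [SetLike.mem_coe, hKF, coe_filter, Set.mem_setOf_eq, mem_univ, true_and,
              mem_coe]
            exact MulAction.mem_stabilizer_iff
          rw [hset, Set.ncard_coe_finset]
        omega
      have hABcard : (A.card : ℤ) ≤ ((A*B).card : ℤ) := by
        have hinj : (A.image (fun a => a * b0)).card = A.card :=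
          Finset.card_image_of_injective _ (fun u v huv => by
            simpa using mul_right_cancel huv)
        have himage : A.image (fun a => a * b0) ⊆ A * B := by
          intro z hz
          simp only [Finset.mem_image] at hz
          obtain ⟨a, ha, rfl⟩ := hz
          exact mul_mem_mul ha hb0
        have := Finset.card_le_card himage
        rw [hinj] at this
        exact_mod_cast this
      have hABlb : min (Fintype.card G : ℤ) ((A.card : ℤ) + B.card - μ - t + 1)
          ≤ ((A*B).card : ℤ) := by
        have h1 : (A.card : ℤ) + B.card - μ - t + 1 ≤ A.card := by
          have : (B.card : ℤ) ≤ μ := by exact_mod_cast hBsub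
          have ht' : (1:ℤ) ≤ t := by exact_mod_cast ht
          linarith
        exact le_trans (min_le_right _ _) (le_trans h1 hABcard)
      calc (t:ℤ) * min (Fintype.card G : ℤ) ((A.card : ℤ) + B.card - μ - t + 1)
          ≤ (t:ℤ) * ((A*B).card : ℤ) := mul_le_mul_of_nonneg_left hABlb (by positivity)
        _ ≤ _ := hSt
  · -- main case: transform
    push_neg at hfull
    obtain ⟨e, hne, hnsub⟩ := hfull
    set s := (A ∩ e • B).card with hs
    have hB1card : (B ∩ e⁻¹ • A).card = s := by
      rw [hs, ← card_smul_finset e (B ∩ e⁻¹ • A), smul_finset_inter, smul_inv_smul, inter_comm]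
    have hs1 : 1 ≤ s := Finset.card_pos.2 hne
    have hslt : s < B.card := by
      have hss : A ∩ e • B ⊂ e • B :=
        ⟨inter_subset_right, fun h => hnsub fun y hy => (mem_inter.1 (h hy)).1⟩
      have := Finset.card_lt_card hss
      rwa [card_smul_finset] at this
    have hstA : s < A.card ∨ s ≤ A.card := by
      right
      exact le_trans (Finset.card_le_card inter_subset_left) le_rfl
    have hsleA : s ≤ A.card := le_trans (Finset.card_le_card inter_subset_left) le_rfl
    have hkey : (A.card : ℤ) + B.card - μ - s + 1 ≤ Fintype.card G := by
      by_contra hcon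
      push_neg at hcon
      have hpig := card_inter_lb A (e • B)
      rw [card_smul_finset] at hpig
      have hμ1' : (1:ℤ) ≤ μ := by exact_mod_cast hμ1
      have hss : ((A ∩ e • B).card : ℤ) = (s:ℤ) := by rw [hs]
      rw [hss] at hpig
      linarith
    have hA1cards : (A ∪ e • B).card + s = A.card + B.card := by
      have h := Finset.card_union_add_card_inter A (e • B)
      rw [card_smul_finset] at h
      rw [← hs] at h
      exact h
    have hA3card : (A \ e • B).card = A.card - s := by
      have h := Finset.card_sdiff_add_card_inter A (e • B)
      rw [← hs] at h
      omega
    have hB3card : (B \ e⁻¹ • A).card = B.card - s := by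
      have h := Finset.card_sdiff_add_card_inter B (e⁻¹ • A)
      rw [hB1card] at h
      omega
    by_cases hst : t ≤ s
    · -- transform keeps t
      have hmono : ∀ x : G,
          (min t (rep (A ∪ e • B) (B ∩ e⁻¹ • A) x) : ℤ) ≤ (min t (rep A B x) : ℤ) := by
        intro x
        have h1 := rep_transform A B e x
        have h2 : min t (rep (A ∪ e • B) (B ∩ e⁻¹ • A) x) ≤ min t (rep A B x) := by omega
        exact_mod_cast h2
      have hcall := IH (t + s) (by omega) t (A ∪ e • B) (B ∩ e⁻¹ • A)
        (by rw [hB1card]) (hA.mono subset_union_left)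
        (Finset.card_pos.1 (by rw [hB1card]; omega)) ht
        (le_trans htA (Finset.card_le_card subset_union_left))
        (by rw [hB1card]; exact hst)
      have hrw : ((A ∪ e • B).card : ℤ) + ((B ∩ e⁻¹ • A).card : ℤ)
          = (A.card : ℤ) + B.card := by
        rw [hB1card]
        exact_mod_cast hA1cards
      calc (t:ℤ) * min (Fintype.card G : ℤ) ((A.card : ℤ) + B.card - μ - t + 1)
          = (t:ℤ) * min (Fintype.card G : ℤ)
              (((A ∪ e • B).card : ℤ) + ((B ∩ e⁻¹ • A).card : ℤ) - μ - t + 1) := by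
            rw [hrw]
        _ ≤ ∑ x : G, (min t (rep (A ∪ e • B) (B ∩ e⁻¹ • A) x) : ℤ) := hcall
        _ ≤ ∑ x : G, (min t (rep A B x) : ℤ) := Finset.sum_le_sum fun x _ => hmono x
    · -- split
      push_neg at hst
      have hcall1 := IH (s + s) (by omega) s (A ∪ e • B) (B ∩ e⁻¹ • A)
        (by rw [hB1card]) (hA.mono subset_union_left)
        (Finset.card_pos.1 (by rw [hB1card]; omega)) hs1
        (le_trans hsleA (Finset.card_le_card subset_union_left))
        (by rw [hB1card])
      have hcall2 := IH ((t - s) + (B.card - s)) (by omega) (t - s) (A \ e • B) (B \ e⁻¹ • A)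
        (by rw [hB3card]) (Finset.card_pos.1 (by rw [hA3card]; omega))
        (Finset.card_pos.1 (by rw [hB3card]; omega)) (by omega)
        (by rw [hA3card]; omega) (by rw [hB3card]; omega)
      have hpt : ∀ x : G, min (s:ℤ) ((rep (A ∪ e • B) (B ∩ e⁻¹ • A) x : ℕ) : ℤ)
          + min ((t - s : ℕ) : ℤ) ((rep (A \ e • B) (B \ e⁻¹ • A) x : ℕ) : ℤ)
          ≤ min (t:ℤ) ((rep A B x : ℕ) : ℤ) := by
        intro x
        have h1 := rep_transform A B e x
        have h2 : min s (rep (A ∪ e • B) (B ∩ e⁻¹ • A) x)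
            + min (t - s) (rep (A \ e • B) (B \ e⁻¹ • A) x) ≤ min t (rep A B x) := by omega
        exact_mod_cast h2
      have hsum : ∑ x : G, min (s:ℤ) ((rep (A ∪ e • B) (B ∩ e⁻¹ • A) x : ℕ) : ℤ)
          + ∑ x : G, min ((t - s : ℕ) : ℤ) ((rep (A \ e • B) (B \ e⁻¹ • A) x : ℕ) : ℤ)
          ≤ ∑ x : G, min (t:ℤ) ((rep A B x : ℕ) : ℤ) := by
        rw [← Finset.sum_add_distrib]
        exact Finset.sum_le_sum fun x _ => hpt x
      -- rewrite the two calls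
      have hA1c : ((A ∪ e • B).card : ℤ) = (A.card : ℤ) + B.card - s := by
        omega
      have hB1c : ((B ∩ e⁻¹ • A).card : ℤ) = (s : ℤ) := by rw [hB1card]
      have hA3c : ((A \ e • B).card : ℤ) = (A.card : ℤ) - s := by
        omega
      have hB3c : ((B \ e⁻¹ • A).card : ℤ) = (B.card : ℤ) - s := by
        omega
      have htsc : ((t - s : ℕ) : ℤ) = (t : ℤ) - s := by
        omega
      rw [hA1c, hB1c] at hcall1
      rw [hA3c, hB3c] at hcall2
      rw [htsc] at hcall2 hsum
      have hmin1 : min (Fintype.card G : ℤ) ((A.card : ℤ) + B.card - s + s - μ - s + 1)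
          = (A.card : ℤ) + B.card - μ - s + 1 := by
        rw [show (A.card : ℤ) + B.card - s + s - μ - s + 1
            = (A.card : ℤ) + B.card - μ - s + 1 by ring]
        exact min_eq_right hkey
      rw [hmin1] at hcall1
      have hv2 : (A.card : ℤ) - s + ((B.card : ℤ) - s) - μ - ((t:ℤ) - s) + 1
          = (A.card : ℤ) + B.card - μ - t + 1 - s := by ring
      rw [hv2] at hcall2
      have hmin2 : min (Fintype.card G : ℤ) ((A.card : ℤ) + B.card - μ - t + 1 - s)
          = (A.card : ℤ) + B.card - μ - t + 1 - s := by
        apply min_eq_right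
        have hμ0 : (0:ℤ) ≤ μ := by positivity
        have hs0 : (0:ℤ) ≤ s := by positivity
        linarith
      rw [hmin2] at hcall2
      have hminL : min (Fintype.card G : ℤ) ((A.card : ℤ) + B.card - μ - t + 1)
          = (A.card : ℤ) + B.card - μ - t + 1 := by
        apply min_eq_right
        have hμ1' : (1:ℤ) ≤ μ := by exact_mod_cast hμ1
        linarith
      rw [hminL]
      have hiden : (s:ℤ) * ((A.card : ℤ) + B.card - μ - s + 1)
          + ((t:ℤ) - s) * ((A.card : ℤ) + B.card - μ - t + 1 - s)
          = (t:ℤ) * ((A.card : ℤ) + B.card - μ - t + 1) := by ring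
      linarith

theorem stmt8 [Fintype G] (A B : Finset G) (hA : A.Nonempty) (hB : B.Nonempty)
    (t : ℕ) (ht : 1 ≤ t) (htA : t ≤ A.card) (htB : t ≤ B.card)
    (μ : ℕ) (hμ : μ = sSup {n | ∃ H : Subgroup G, H ≠ ⊤ ∧ Nat.card H = n}) :
    (t : ℤ) * min (Fintype.card G : ℤ) ((A.card : ℤ) + B.card - μ - t + 1) ≤
      ∑ i ∈ Finset.Icc 1 t, ((N i A B).card : ℤ) := by
  have hrhs : ∑ i ∈ Finset.Icc 1 t, ((N i A B).card : ℤ)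
      = ∑ x : G, (min t (rep A B x) : ℤ) := by
    rw [← Nat.cast_sum, sum_N_eq, Nat.cast_sum]
    simp only [Nat.cast_min]
  rw [hrhs]
  rcases subsingleton_or_nontrivial G with hsub | hnt
  · -- trivial group
    have hG1 : Fintype.card G = 1 := Fintype.card_eq_one_iff.2
      ⟨1, fun x => Subsingleton.elim x 1⟩
    have hA1 : A.card = 1 := le_antisymm (le_trans (Finset.card_le_univ A)
      hG1.le) (Finset.card_pos.2 hA)
    have hB1 : B.card = 1 := le_antisymm (le_trans (Finset.card_le_univ B)
      hG1.le) (Finset.card_pos.2 hB)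
    have ht1 : t = 1 := le_antisymm (htA.trans hA1.le) ht
    have hrep : 1 ≤ rep A B 1 := by
      obtain ⟨a, ha⟩ := hA
      obtain ⟨b, hb⟩ := hB
      have : (a, b) ∈ (A ×ˢ B).filter (fun p => p.1 * p.2 = 1) := by
        simp only [mem_filter, mem_product]
        exact ⟨⟨ha, hb⟩, Subsingleton.elim _ _⟩
      unfold rep
      exact Finset.card_pos.2 ⟨_, this⟩
    have hS : (1:ℤ) ≤ ∑ x : G, (min t (rep A B x) : ℤ) := by
      have h1 : (1:ℤ) ≤ (min t (rep A B 1) : ℤ) := by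
        have : 1 ≤ min t (rep A B 1) := le_min ht hrep
        exact_mod_cast this
      calc (1:ℤ) ≤ (min t (rep A B 1) : ℤ) := h1
        _ ≤ ∑ x : G, (min t (rep A B x) : ℤ) := by
            apply Finset.single_le_sum (f := fun x => (min t (rep A B x) : ℤ))
              (fun x _ => by positivity) (mem_univ 1)
    calc (t : ℤ) * min (Fintype.card G : ℤ) ((A.card : ℤ) + B.card - μ - t + 1)
        ≤ (t:ℤ) * (Fintype.card G : ℤ) :=
          mul_le_mul_of_nonneg_left (min_le_left _ _) (by positivity)
      _ = 1 := by rw [hG1, ht1]; norm_num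
      _ ≤ _ := hS
  · have hbdd : BddAbove {n | ∃ H : Subgroup G, H ≠ ⊤ ∧ Nat.card H = n} := by
      refine ⟨Fintype.card G, ?_⟩
      rintro n ⟨H, -, rfl⟩
      simpa using Nat.card_le_card_of_injective _ H.subtype_injective
    have hμ1 : 1 ≤ μ := by
      rw [hμ]
      exact le_csSup hbdd ⟨⊥, bot_ne_top, Subgroup.card_bot⟩
    have hμtop : ∀ K : Subgroup G, K ≠ ⊤ → Nat.card K ≤ μ := by
      intro K hK
      rw [hμ]
      exact le_csSup hbdd ⟨K, hK, rfl⟩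
    exact main_ind μ hμ1 hμtop (t + B.card) t A B le_rfl hA hB ht htA htB
end

section
/- (Kemperman's non-abelian Kneser-type theorem, abelian specialization) Let A, B be finite nonempty subsets of an abelian group G. Then there exists a finite subgroup H of G, a ∈ A, and b ∈ B such that |AB| ≥ |A| + |B| − |H| and aHb ⊆ AB. -/
open Finset Pointwise

variable {G : Type*} [CommGroup G] [DecidableEq G]

private lemma key19 : ∀ (n : ℕ) (A B : Finset G), A.Nonempty → B.Nonempty → B.card ≤ n →
    ∃ (H : Subgroup G), (H : Set G).Finite ∧ ∃ c ∈ A * B,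
      A.card + B.card ≤ (A * B).card + Nat.card H ∧ ∀ h ∈ H, c * h ∈ (A * B : Finset G) := by
  intro n
  induction n with
  | zero =>
    intro A B hA hB hcard
    exact absurd (Finset.card_eq_zero.1 (Nat.le_zero.1 hcard)) hB.ne_empty
  | succ n ih =>
    intro A B hA hB hcard
    by_cases hcase : ∃ a ∈ A, ∃ b ∈ B, ∃ b' ∈ B, a * b⁻¹ * b' ∉ A
    · obtain ⟨a, ha, b, hb, b', hb', hnot⟩ := hcase
      set e := a * b⁻¹ with he
      set A' := A ∪ e • B with hA'
      set B' := B ∩ e⁻¹ • A with hB'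
      have hsub : A' * B' ⊆ A * B := Finset.mulDysonETransform.subset e (A, B)
      have hcards : A'.card + B'.card = A.card + B.card :=
        Finset.mulDysonETransform.card e (A, B)
      have hbB' : b ∈ B' := by
        refine Finset.mem_inter.2 ⟨hb, ?_⟩
        refine Finset.mem_smul_finset.2 ⟨a, ha, ?_⟩
        simp [he, smul_eq_mul, mul_assoc]
      have hb'B' : b' ∉ B' := by
        intro hmem
        obtain ⟨y, hy, hey⟩ := Finset.mem_smul_finset.1 (Finset.mem_inter.1 hmem).2
        apply hnot
        have : e * b' = y := by
          rw [← hey]; simp [smul_eq_mul, mul_assoc]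
        rw [he] at this
        rwa [this]
      have hBsub : B' ⊆ B := Finset.inter_subset_left
      have hlt : B'.card < B.card :=
        Finset.card_lt_card ⟨hBsub, fun hsub' => hb'B' (hsub' hb')⟩
      obtain ⟨H, hfin, c, hc, hineq, hcoset⟩ :=
        ih A' B' (hA.mono Finset.subset_union_left) ⟨b, hbB'⟩
          (Nat.lt_succ_iff.1 (lt_of_lt_of_le hlt hcard))
      refine ⟨H, hfin, c, hsub hc, ?_, fun h hh => hsub (hcoset h hh)⟩
      calc A.card + B.card = A'.card + B'.card := hcards.symm
        _ ≤ (A' * B').card + Nat.card H := hineq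
        _ ≤ (A * B).card + Nat.card H := by
            exact Nat.add_le_add_right (Finset.card_le_card hsub) _
    · push_neg at hcase
      obtain ⟨a₀, ha₀⟩ := hA
      obtain ⟨b₀, hb₀⟩ := hB
      set S : Set G := (↑B)⁻¹ * (↑B : Set G) with hS
      set H := Subgroup.closure S with hH
      -- every element of H stabilizes A on the right
      have stab : ∀ g ∈ H, ∀ a ∈ A, a * g ∈ A := by
        intro g hg
        refine Subgroup.closure_induction (p := fun g _ => ∀ a ∈ A, a * g ∈ A) ?_ ?_ ?_ ?_ hg
        · rintro x hx a ha
          obtain ⟨u, hu, v, hv, rfl⟩ := hx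
          have hw : u⁻¹ ∈ B := by simpa using hu
          have := hcase a ha u⁻¹ hw v hv
          simpa [mul_assoc] using this
        · intro a ha; simpa using ha
        · intro x y _ _ hx hy a ha
          rw [← mul_assoc]; exact hy _ (hx a ha)
        · intro x _ hx a ha
          have himg : A.image (· * x) = A := by
            apply Finset.eq_of_subset_of_card_le
            · intro z hz
              obtain ⟨w, hw, rfl⟩ := Finset.mem_image.1 hz
              exact hx w hw
            · rw [Finset.card_image_of_injective _ (mul_left_injective x)]
          have : a ∈ A.image (· * x) := by rw [himg]; exact ha
          obtain ⟨w, hw, hwx⟩ := Finset.mem_image.1 this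
          have : a * x⁻¹ = w := by rw [← hwx]; group
          rwa [this]
      have hfin : (H : Set G).Finite := by
        apply Set.Finite.subset ((A.finite_toSet).smul_set (a := a₀⁻¹))
        intro h hh
        exact ⟨a₀ * h, stab h hh a₀ ha₀, by simp [smul_eq_mul]⟩
      haveI : Finite (H : Set G) := hfin.to_subtype
      -- |B| ≤ |H|
      have hBH : B.card ≤ Nat.card H := by
        rw [← SetLike.coe_sort_coe, Nat.card_eq_card_finite_toFinset hfin]
        apply Finset.card_le_card_of_injOn (fun b => b₀⁻¹ * b)
        · intro b hb
          rw [Finset.mem_coe, Set.Finite.mem_toFinset]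
          exact Subgroup.subset_closure (Set.mul_mem_mul (Set.inv_mem_inv.2 hb₀) hb)
        · intro x _ y _ hxy
          exact mul_left_cancel hxy
      refine ⟨H, hfin, a₀ * b₀, Finset.mul_mem_mul ha₀ hb₀, ?_, ?_⟩
      · have h1 : A.card ≤ (A * B).card := Finset.card_le_card_mul_right ⟨b₀, hb₀⟩
        omega
      · intro h hh
        rw [mul_right_comm a₀ b₀ h]
        exact Finset.mul_mem_mul (stab h hh a₀ ha₀) hb₀

theorem stmt19 (A B : Finset G) (hA : A.Nonempty) (hB : B.Nonempty) :
    ∃ (H : Subgroup G), (H : Set G).Finite ∧ ∃ a ∈ A, ∃ b ∈ B,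
      A.card + B.card ≤ (A * B).card + Nat.card H ∧
      ∀ h ∈ H, a * h * b ∈ (A * B : Finset G) := by
  obtain ⟨H, hfin, c, hc, hcard, hcoset⟩ := key19 B.card A B hA hB le_rfl
  obtain ⟨a, ha, b, hb, rfl⟩ := Finset.mem_mul.1 hc
  refine ⟨H, hfin, a, ha, b, hb, hcard, fun h hh => ?_⟩
  have := hcoset h hh
  rwa [mul_right_comm a b h] at this
end
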